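/- Typability of the π-calculus translation: for every finitary π-term P with free names in a finite set X = {x₁,…,x_k}, the translated solos term ⟦P⟧ is typable in the context x₁:W, …, x_k:W; more precisely, the auxiliary translation ⟦P⟧_v is typable in the context x₁:W, …, x_k:W, v:V. -/
import Mathlib


/-- The two types of the solos typing system. -/
inductive STy : Type
  | V : STy
  | W : STy
deriving DecidableEq

/-- Triadic solos terms: `0`, input solo `u⟨x₁x₂x₃⟩`, output solo `ū⟨x₁x₂x₃⟩`,
parallel composition and typed restriction `(νx^U)P`.  Names are natural numbers. -/
inductive SoloTerm : Type
  | nil : SoloTerm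
  | inp (u x1 x2 x3 : ℕ) : SoloTerm
  | out (u x1 x2 x3 : ℕ) : SoloTerm
  | par (P Q : SoloTerm) : SoloTerm
  | nu (x : ℕ) (U : STy) (P : SoloTerm) : SoloTerm
deriving DecidableEq

/-- Free names of a solos term. -/
def SoloTerm.fn : SoloTerm → Set ℕ
  | .nil => ∅
  | .inp u a b c => {u, a, b, c}
  | .out u a b c => {u, a, b, c}
  | .par P Q => P.fn ∪ Q.fn
  | .nu x _ P => P.fn \ {x}

/-- Typing contexts: partial maps from names to types. -/
abbrev SoloCtx := ℕ → Option STy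

/-- The typing system of the (acyclic) solos calculus: a subject of type `V`
has objects of types `W`, `W`, `V`; a subject of type `W` has objects of
types `W`, `V`, `V`. -/
inductive STypes : SoloCtx → SoloTerm → Prop
  | nil {Γ} : STypes Γ .nil
  | par {Γ P Q} : STypes Γ P → STypes Γ Q → STypes Γ (.par P Q)
  | nu {Γ x U P} : STypes (Function.update Γ x (some U)) P → STypes Γ (.nu x U P)
  | inpV {Γ u z z' y} : Γ u = some .V → Γ z = some .W → Γ z' = some .W → Γ y = some .V →
      STypes Γ (.inp u z z' y)
  | outV {Γ u z z' y} : Γ u = some .V → Γ z = some .W → Γ z' = some .W → Γ y = some .V →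
      STypes Γ (.out u z z' y)
  | inpW {Γ u z y y'} : Γ u = some .W → Γ z = some .W → Γ y = some .V → Γ y' = some .V →
      STypes Γ (.inp u z y y')
  | outW {Γ u z y y'} : Γ u = some .W → Γ z = some .W → Γ y = some .V → Γ y' = some .V →
      STypes Γ (.out u z y y')

/-- Finitary monadic π-terms: `0`, input prefix `u(x).P`, output prefix
`ū⟨x⟩.P`, parallel composition and restriction `(νx)P`. -/
inductive Pi : Type
  | nil : Pi
  | inp (u x : ℕ) (P : Pi) : Pi
  | out (u x : ℕ) (P : Pi) : Pi
  | par (P Q : Pi) : Pi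
  | nu (x : ℕ) (P : Pi) : Pi

/-- Free names of a π-term. -/
def Pi.fn : Pi → Finset ℕ
  | .nil => ∅
  | .inp u x P => insert u (P.fn.erase x)
  | .out u x P => insert u (insert x P.fn)
  | .par P Q => P.fn ∪ Q.fn
  | .nu x P => P.fn.erase x

/-- All names (free or bound) occurring in a π-term. -/
def Pi.names : Pi → Finset ℕ
  | .nil => ∅
  | .inp u x P => insert u (insert x P.names)
  | .out u x P => insert u (insert x P.names)
  | .par P Q => P.names ∪ Q.names
  | .nu x P => insert x P.names

/-- Bound names of a π-term. -/
def Pi.bn : Pi → Finset ℕ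
  | .nil => ∅
  | .inp _ x P => insert x P.bn
  | .out _ _ P => P.bn
  | .par P Q => P.bn ∪ Q.bn
  | .nu x P => insert x P.bn

/-- A π-term has `Good` names when its binders are pairwise distinct and do not
clash across parallel components (names "as different as possible", obtainable
by α-conversion). -/
def Pi.Good : Pi → Prop
  | .nil => True
  | .inp _ x P => P.Good ∧ x ∉ P.bn
  | .out _ _ P => P.Good
  | .par P Q => P.Good ∧ Q.Good ∧ Disjoint P.bn Q.bn ∧
      Disjoint P.bn Q.fn ∧ Disjoint Q.bn P.fn
  | .nu x P => P.Good ∧ x ∉ P.bn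

/-- The catalyst `C(v) = (νz) v(z z v)`. -/
def catT (v z : ℕ) : SoloTerm := .nu z .W (.inp v z z v)

/-- The translation `⟦P⟧_v` of a π-term into triadic solos, using a counter `c`
as supply of fresh names (the next counter value is returned):
`⟦u(x).P⟧_v = (νw)(νy)( v̄(u w y) | C(y) | (νx)(νv')( w(x v v') | ⟦P⟧_{v'} ))`,
`⟦ū⟨x⟩.P⟧_v = (νw)(νy)( v̄(u w y) | C(y) | (νv')( w̄(x v' v) | ⟦P⟧_{v'} ))`,
homomorphically on `0`, parallel composition and restriction.
Channel names get type `W`, location names `v, v', y` type `V`, names `w`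
type `W`. -/
def ptrans : Pi → ℕ → ℕ → SoloTerm × ℕ
  | .nil, _, c => (.nil, c)
  | .inp u x P, v, c =>
      let w := c; let y := c + 1; let z := c + 2; let v' := c + 3
      let r := ptrans P v' (c + 4)
      (.nu w .W (.nu y .V (.par (.out v u w y) (.par (catT y z)
        (.nu x .W (.nu v' .V (.par (.inp w x v v') r.1)))))), r.2)
  | .out u x P, v, c =>
      let w := c; let y := c + 1; let z := c + 2; let v' := c + 3
      let r := ptrans P v' (c + 4)
      (.nu w .W (.nu y .V (.par (.out v u w y) (.par (catT y z)
        (.nu v' .V (.par (.out w x v' v) r.1))))), r.2)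
  | .par P Q, v, c =>
      let a := ptrans P v c
      let b := ptrans Q v a.2
      (.par a.1 b.1, b.2)
  | .nu x P, v, c =>
      let a := ptrans P v c
      (.nu x .W a.1, a.2)

/-- The top-level translation `⟦P⟧ = (νv)(⟦P⟧_v | C(v))`. -/
def ptransTop (P : Pi) (c : ℕ) : SoloTerm :=
  let v := c; let z := c + 1
  .nu v .V (.par (ptrans P v (c + 2)).1 (catT v z))


lemma Pi.fn_subset_names (P : Pi) : P.fn ⊆ P.names := by
  induction P with
  | nil => simp [Pi.fn, Pi.names]
  | inp u x P ih =>
      simp only [Pi.fn, Pi.names]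
      intro a ha
      rcases Finset.mem_insert.1 ha with h | h
      · simp [h]
      · simp [ih (Finset.mem_of_mem_erase h)]
  | out u x P ih =>
      simp only [Pi.fn, Pi.names]
      intro a ha
      rcases Finset.mem_insert.1 ha with h | h
      · simp [h]
      · rcases Finset.mem_insert.1 h with h | h
        · simp [h]
        · simp [ih h]
  | par P Q ihP ihQ =>
      simp only [Pi.fn, Pi.names]
      exact Finset.union_subset_union ihP ihQ
  | nu x P ih =>
      simp only [Pi.fn, Pi.names]
      intro a ha
      simp [ih (Finset.mem_of_mem_erase ha)]

lemma ptrans_counter_le (P : Pi) : ∀ v c, c ≤ (ptrans P v c).2 := by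
  induction P with
  | nil => intro v c; simp [ptrans]
  | inp u x P ih => intro v c; simp only [ptrans]; have := ih (c+3) (c+4); omega
  | out u x P ih => intro v c; simp only [ptrans]; have := ih (c+3) (c+4); omega
  | par P Q ihP ihQ =>
      intro v c; simp only [ptrans]
      have h1 := ihP v c
      have h2 := ihQ v (ptrans P v c).2
      omega
  | nu x P ih => intro v c; simp only [ptrans]; exact ih v c

lemma upd_eq (Γ : SoloCtx) (a : ℕ) (T : Option STy) : Function.update Γ a T a = T :=
  Function.update_self a T Γ

lemma upd_ne (Γ : SoloCtx) (a b : ℕ) (T : Option STy) (h : a ≠ b) :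
    Function.update Γ b T a = Γ a :=
  Function.update_of_ne h T Γ

lemma key (P : Pi) : ∀ (Γ : SoloCtx) (v c : ℕ),
    (∀ x ∈ P.fn, Γ x = some .W) → Γ v = some .V →
    (∀ x ∈ P.names, x < c) → v < c → v ∉ P.names →
    STypes Γ (ptrans P v c).1 := by
  induction P with
  | nil => intro Γ v c _ _ _ _ _; exact STypes.nil
  | inp u x P ih =>
      intro Γ v c hfn hv hn hvc hvn
      have hu : Γ u = some .W := hfn u (by simp [Pi.fn])
      have hun : u < c := hn u (by simp [Pi.names])
      have hxn : x < c := hn x (by simp [Pi.names])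
      have hvu : v ≠ u := by rintro rfl; exact hvn (by simp [Pi.names])
      have hvx : v ≠ x := by rintro rfl; exact hvn (by simp [Pi.names])
      simp only [ptrans]
      refine STypes.nu (STypes.nu (STypes.par ?_ (STypes.par ?_ ?_)))
      · refine STypes.outV ?_ ?_ ?_ ?_
        · rw [upd_ne _ _ _ _ (by omega), upd_ne _ _ _ _ (by omega)]; exact hv
        · rw [upd_ne _ _ _ _ (by omega), upd_ne _ _ _ _ (by omega)]; exact hu
        · rw [upd_ne _ _ _ _ (by omega), upd_eq]
        · rw [upd_eq]
      · refine STypes.nu (STypes.inpV ?_ ?_ ?_ ?_)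
        · rw [upd_ne _ _ _ _ (by omega), upd_eq]
        · rw [upd_eq]
        · rw [upd_eq]
        · rw [upd_ne _ _ _ _ (by omega), upd_eq]
      · refine STypes.nu (STypes.nu (STypes.par ?_ ?_))
        · refine STypes.inpW ?_ ?_ ?_ ?_
          · rw [upd_ne _ _ _ _ (by omega), upd_ne _ _ _ _ (by omega),
              upd_ne _ _ _ _ (by omega), upd_eq]
          · rw [upd_ne _ _ _ _ (by omega), upd_eq]
          · rw [upd_ne _ _ _ _ (by omega), upd_ne _ _ _ _ hvx,
              upd_ne _ _ _ _ (by omega), upd_ne _ _ _ _ (by omega)]; exact hv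
          · rw [upd_eq]
        · refine ih _ (c+3) (c+4) ?_ ?_ ?_ (by omega) ?_
          · intro a ha
            have hac : a < c := hn a (by
              simp only [Pi.names, Finset.mem_insert]
              exact Or.inr (Or.inr (Pi.fn_subset_names P ha)))
            by_cases hax : a = x
            · subst hax
              rw [upd_ne _ _ _ _ (by omega), upd_eq]
            · rw [upd_ne _ _ _ _ (by omega), upd_ne _ _ _ _ hax,
                upd_ne _ _ _ _ (by omega), upd_ne _ _ _ _ (by omega)]
              exact hfn a (by
                simp only [Pi.fn, Finset.mem_insert]
                exact Or.inr (Finset.mem_erase.2 ⟨hax, ha⟩))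
          · rw [upd_eq]
          · intro a ha
            have := hn a (by
              simp only [Pi.names, Finset.mem_insert]; exact Or.inr (Or.inr ha))
            omega
          · intro ha
            have := hn _ (by
              simp only [Pi.names, Finset.mem_insert]; exact Or.inr (Or.inr ha))
            omega
  | out u x P ih =>
      intro Γ v c hfn hv hn hvc hvn
      have hu : Γ u = some .W := hfn u (by simp [Pi.fn])
      have hx : Γ x = some .W := hfn x (by simp [Pi.fn])
      have hun : u < c := hn u (by simp [Pi.names])
      have hxn : x < c := hn x (by simp [Pi.names])
      have hvu : v ≠ u := by rintro rfl; exact hvn (by simp [Pi.names])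
      have hvx : v ≠ x := by rintro rfl; exact hvn (by simp [Pi.names])
      simp only [ptrans]
      refine STypes.nu (STypes.nu (STypes.par ?_ (STypes.par ?_ ?_)))
      · refine STypes.outV ?_ ?_ ?_ ?_
        · rw [upd_ne _ _ _ _ (by omega), upd_ne _ _ _ _ (by omega)]; exact hv
        · rw [upd_ne _ _ _ _ (by omega), upd_ne _ _ _ _ (by omega)]; exact hu
        · rw [upd_ne _ _ _ _ (by omega), upd_eq]
        · rw [upd_eq]
      · refine STypes.nu (STypes.inpV ?_ ?_ ?_ ?_)
        · rw [upd_ne _ _ _ _ (by omega), upd_eq]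
        · rw [upd_eq]
        · rw [upd_eq]
        · rw [upd_ne _ _ _ _ (by omega), upd_eq]
      · refine STypes.nu (STypes.par ?_ ?_)
        · refine STypes.outW ?_ ?_ ?_ ?_
          · rw [upd_ne _ _ _ _ (by omega), upd_ne _ _ _ _ (by omega), upd_eq]
          · rw [upd_ne _ _ _ _ (by omega), upd_ne _ _ _ _ (by omega),
              upd_ne _ _ _ _ (by omega)]; exact hx
          · rw [upd_eq]
          · rw [upd_ne _ _ _ _ (by omega), upd_ne _ _ _ _ (by omega),
              upd_ne _ _ _ _ (by omega)]; exact hv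
        · refine ih _ (c+3) (c+4) ?_ ?_ ?_ (by omega) ?_
          · intro a ha
            have hac : a < c := hn a (by
              simp only [Pi.names, Finset.mem_insert]
              exact Or.inr (Or.inr (Pi.fn_subset_names P ha)))
            rw [upd_ne _ _ _ _ (by omega), upd_ne _ _ _ _ (by omega),
              upd_ne _ _ _ _ (by omega)]
            exact hfn a (by
              simp only [Pi.fn, Finset.mem_insert]; exact Or.inr (Or.inr ha))
          · rw [upd_eq]
          · intro a ha
            have := hn a (by
              simp only [Pi.names, Finset.mem_insert]; exact Or.inr (Or.inr ha))
            omega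
          · intro ha
            have := hn _ (by
              simp only [Pi.names, Finset.mem_insert]; exact Or.inr (Or.inr ha))
            omega
  | par P Q ihP ihQ =>
      intro Γ v c hfn hv hn hvc hvn
      simp only [ptrans]
      have hle := ptrans_counter_le P v c
      refine STypes.par ?_ ?_
      · exact ihP Γ v c (fun a ha => hfn a (by simp [Pi.fn, ha])) hv
          (fun a ha => hn a (by simp [Pi.names, ha])) hvc
          (fun h => hvn (by simp [Pi.names, h]))
      · exact ihQ Γ v _ (fun a ha => hfn a (by simp [Pi.fn, ha])) hv
          (fun a ha => lt_of_lt_of_le (hn a (by simp [Pi.names, ha])) hle)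
          (lt_of_lt_of_le hvc hle)
          (fun h => hvn (by simp [Pi.names, h]))
  | nu x P ih =>
      intro Γ v c hfn hv hn hvc hvn
      simp only [ptrans]
      have hvx : v ≠ x := by rintro rfl; exact hvn (by simp [Pi.names])
      refine STypes.nu (ih _ v c ?_ ?_ ?_ hvc ?_)
      · intro a ha
        by_cases hax : a = x
        · subst hax; rw [upd_eq]
        · rw [upd_ne _ _ _ _ hax]
          exact hfn a (Finset.mem_erase.2 ⟨hax, ha⟩)
      · rw [upd_ne _ _ _ _ hvx]; exact hv
      · intro a ha; exact hn a (by simp [Pi.names, ha])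
      · intro h; exact hvn (by simp [Pi.names, h])

/-- Typability of the π-calculus translation: if the free names
of the π-term `P` are contained in the finite set `X`, then
`x₁:W, …, x_k:W ⊢ ⟦P⟧` and, more precisely,
`x₁:W, …, x_k:W, v:V ⊢ ⟦P⟧_v` (here `v = c`). -/
theorem stmt14 (P : Pi) (X : Finset ℕ) (hfn : P.fn ⊆ X) (c : ℕ)
    (hX : ∀ x ∈ X, x < c) (hn : ∀ x ∈ P.names, x < c) :
    STypes (fun x => if x ∈ X then some .W else none) (ptransTop P c) ∧
    STypes (Function.update (fun x => if x ∈ X then some .W else none)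
        c (some .V))
      (ptrans P c (c + 2)).1 := by
  have hk : ∀ a ∈ P.fn,
      (Function.update (fun x => if x ∈ X then some STy.W else none) c (some STy.V)) a
        = some STy.W := by
    intro a ha
    have hac : a < c := hX a (hfn ha)
    rw [upd_ne _ _ _ _ (by omega)]
    simp [hfn ha]
  have hmain : STypes (Function.update (fun x => if x ∈ X then some STy.W else none)
      c (some STy.V)) (ptrans P c (c + 2)).1 := by
    refine key P _ c (c+2) hk ?_ ?_ (by omega) ?_
    · rw [upd_eq]
    · intro a ha; have := hn a ha; omega
    · intro h; have := hn c h; omega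
  refine ⟨?_, hmain⟩
  unfold ptransTop
  refine STypes.nu (STypes.par hmain ?_)
  refine STypes.nu (STypes.inpV ?_ ?_ ?_ ?_)
  · rw [upd_ne _ _ _ _ (by omega), upd_eq]
  · rw [upd_eq]
  · rw [upd_eq]
  · rw [upd_ne _ _ _ _ (by omega), upd_eq]
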